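/- arXiv:2002.01589 — 4 statements merged into one kernel-verified Lean document; each statement's English description precedes it below -/
import Mathlib

section
/- Let (A, d, ∧) be a cdga over a field k of characteristic 0, m ≥ 1, and let η₁, η₂ ∈ A¹ ∩ ker d with η₁ − η₂ = da for some a ∈ A⁰. Then wedge multiplication by exp(a ⊗ s) = Σ_{n=0}^{m−1} (1/n!) aⁿ ⊗ sⁿ defines an isomorphism of cochain complexes A(η₁, m) → A(η₂, m), with inverse given by wedge multiplication by exp(−a ⊗ s). -/
/-- A (positively graded) commutative differential graded algebra over a field `k`:
a grading `A : ℕ → Type` of `k`-vector spaces, a unital graded product, and a degree `+1`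
differential satisfying `d ∘ d = 0`, graded commutativity and the graded Leibniz rule. -/
structure GCDA (k : Type) [Field k] where
  A : ℕ → Type
  acg : ∀ n, AddCommGroup (A n)
  amod : ∀ n, Module k (A n)
  mul : ∀ p q : ℕ, A p → A q → A (p + q)
  one : A 0
  d : ∀ p : ℕ, A p → A (p + 1)
  d_add : ∀ p (x y : A p), d p (x + y) = d p x + d p y
  d_smul : ∀ p (c : k) (x : A p), d p (c • x) = c • d p x
  d_d : ∀ p (x : A p), d (p + 1) (d p x) = 0
  mul_add : ∀ p q (x : A p) (y z : A q), mul p q x (y + z) = mul p q x y + mul p q x z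
  add_mul : ∀ p q (x y : A p) (z : A q), mul p q (x + y) z = mul p q x z + mul p q y z
  smul_mul : ∀ p q (c : k) (x : A p) (y : A q), mul p q (c • x) y = c • mul p q x y
  mul_smul : ∀ p q (c : k) (x : A p) (y : A q), mul p q x (c • y) = c • mul p q x y
  one_mul : ∀ p (x : A p), mul 0 p one x = cast (congrArg A (Nat.zero_add p)).symm x
  mul_one : ∀ p (x : A p), mul p 0 x one = x
  mul_assoc : ∀ p q r (x : A p) (y : A q) (z : A r),
    mul (p + q) r (mul p q x y) z
      = cast (congrArg A (by omega : p + (q + r) = p + q + r)) (mul p (q + r) x (mul q r y z))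
  mul_comm : ∀ p q (x : A p) (y : A q),
    mul p q x y = cast (congrArg A (by omega : q + p = p + q))
      ((-1 : k) ^ (p * q) • mul q p y x)
  leibniz : ∀ p q (x : A p) (y : A q),
    d (p + q) (mul p q x y)
      = cast (congrArg A (by omega : p + 1 + q = p + q + 1)) (mul (p + 1) q (d p x) y)
        + cast (congrArg A (by omega : p + (q + 1) = p + q + 1))
            ((-1 : k) ^ p • mul p (q + 1) x (d q y))

attribute [instance] GCDA.acg GCDA.amod

variable {k : Type} [Field k]

/-- Left multiplication by a degree-one element, recast to land in degree `p + 1`. -/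
def GCDA.etaMul (B : GCDA k) (η : B.A 1) (p : ℕ) (x : B.A p) : B.A (p + 1) :=
  cast (congrArg B.A (by omega : 1 + p = p + 1)) (B.mul 1 p η x)

/-- The differential `d_η` of the `m`-thickening `A(η, m)`: an element of
`A^p ⊗ k[s]/(sᵐ)` is recorded as the tuple of its coefficients `(ω_0, …, ω_{m−1})`
(`ω = Σ_j ω_j ⊗ sʲ`), and `d_η(ω ⊗ φ) = dω ⊗ φ + (η ∧ ω) ⊗ sφ` becomes
`(d_η ω)_j = d(ω_j) + η ∧ ω_{j−1}`. -/
def GCDA.thickD (B : GCDA k) (η : B.A 1) (m : ℕ) (p : ℕ) (ω : Fin m → B.A p) :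
    Fin m → B.A (p + 1) := fun j =>
  B.d p (ω j) +
    (if _h : (j : ℕ) = 0 then 0
     else B.etaMul η p (ω ⟨(j : ℕ) - 1, lt_of_le_of_lt (Nat.sub_le _ _) j.isLt⟩))

/-- Powers `aⁿ` of a degree-zero element. -/
def GCDA.pow0 (B : GCDA k) (a : B.A 0) : ℕ → B.A 0
  | 0 => B.one
  | n + 1 => B.mul 0 0 a (B.pow0 a n)

/-- The coefficient `(1/n!)·aⁿ` of `sⁿ` in `exp(a ⊗ s)`. -/
noncomputable def GCDA.expCoef (B : GCDA k) (a : B.A 0) (n : ℕ) : B.A 0 :=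
  ((n.factorial : k)⁻¹) • B.pow0 a n

/-- Wedge multiplication by `exp(a ⊗ s) = Σ_{n<m} (1/n!) aⁿ ⊗ sⁿ` on the thickening
`A ⊗ k[s]/(sᵐ)` (recorded by coefficient tuples). -/
noncomputable def GCDA.expWedge (B : GCDA k) (a : B.A 0) (m p : ℕ)
    (ω : Fin m → B.A p) : Fin m → B.A p := fun j =>
  ∑ i ∈ Finset.range ((j : ℕ) + 1),
    cast (congrArg B.A (Nat.zero_add p))
      (B.mul 0 p (B.expCoef a i)
        (ω ⟨(j : ℕ) - i, lt_of_le_of_lt (Nat.sub_le _ _) j.isLt⟩))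

/-!
Record elements of `A ⊗ k[s]/(sᵐ)` by their coefficient sequences, extended by zero to `ℕ`.
Wedging with `exp(a ⊗ s)` is then the Cauchy product with `eₙ = aⁿ/n!`, which only reads
coefficients of lower index and so commutes with truncation. The Leibniz rule gives
`d eₙ₊₁ = eₙ da`, hence `d(e ⋆ ω) = e ⋆ dω + s (e ⋆ (da ∧ ω))`, and `da = η₁ − η₂` turns this
into `d_{η₂}(e ⋆ ω) = e ⋆ d_{η₁} ω`. The inverse comes from `exp(s a) exp(t a) = exp((s + t) a)`,
which coefficientwise is the binomial theorem.
-/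

open Finset

/-- Multiplication by `s` on coefficient sequences. -/
def shiftSeq {M : Type} [Zero M] (c : ℕ → M) : ℕ → M
  | 0 => 0
  | j + 1 => c j

theorem shiftSeq_add {M : Type} [AddZeroClass M] (c c' : ℕ → M) :
    shiftSeq (c + c') = shiftSeq c + shiftSeq c' := by
  funext j
  cases j <;> simp [shiftSeq]

theorem sum_antidiagonal_pow_div_factorial {K : Type} [Field K] [CharZero K] (s t : K) (n : ℕ) :
    ∑ x ∈ antidiagonal n, s ^ x.1 / x.1.factorial * (t ^ x.2 / x.2.factorial)
      = (s + t) ^ n / n.factorial := by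
  rw [(Commute.all s t).add_pow', sum_div]
  refine sum_congr rfl fun x hx => ?_
  rw [← HasAntidiagonal.mem_antidiagonal.mp hx, nsmul_eq_mul, Nat.cast_add_choose]
  field_simp [Nat.factorial_ne_zero]

theorem sum_antidiagonal_antidiagonal {M : Type} [AddCommMonoid M] (f : ℕ → ℕ → ℕ → M) (n : ℕ) :
    ∑ x ∈ antidiagonal n, ∑ y ∈ antidiagonal x.2, f x.1 y.1 y.2
      = ∑ x ∈ antidiagonal n, ∑ y ∈ antidiagonal x.1, f y.1 y.2 x.2 := by
  rw [sum_sigma', sum_sigma']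
  refine sum_nbij' (fun x => ⟨(x.1.1 + x.2.1, x.2.2), (x.1.1, x.2.1)⟩)
    (fun x => ⟨(x.2.1, x.2.2 + x.1.2), (x.2.2, x.1.2)⟩) ?_ ?_ ?_ ?_ ?_ <;>
    rintro ⟨⟨i, j⟩, ⟨l, r⟩⟩ h <;> simp_all [mem_sigma, HasAntidiagonal.mem_antidiagonal] <;> omega

namespace GCDA

variable (B : GCDA k)

theorem cast_add {n n' : ℕ} (h : n = n') (x y : B.A n) :
    cast (congrArg B.A h) (x + y) = cast (congrArg B.A h) x + cast (congrArg B.A h) y := by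
  subst h; rfl

theorem d_cast {n n' : ℕ} (h : n = n') (x : B.A n) :
    B.d n' (cast (congrArg B.A h) x) = cast (congrArg B.A (congrArg (· + 1) h)) (B.d n x) := by
  subst h; rfl

theorem mul_hcongr {p p' q q' : ℕ} (hp : p = p') (hq : q = q') {x : B.A p} {x' : B.A p'}
    {y : B.A q} {y' : B.A q'} (hx : x ≍ x') (hy : y ≍ y') : B.mul p q x y ≍ B.mul p' q' x' y' := by
  subst hp hq; cases hx; cases hy; rfl

theorem mul_assoc_heq (p q r : ℕ) (x : B.A p) (y : B.A q) (z : B.A r) :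
    B.mul (p + q) r (B.mul p q x y) z ≍ B.mul p (q + r) x (B.mul q r y z) := by
  rw [B.mul_assoc]; exact cast_heq _ _

theorem mul_comm_heq_of_zero (q : ℕ) (x : B.A 0) (y : B.A q) :
    B.mul 0 q x y ≍ B.mul q 0 y x := by
  rw [B.mul_comm 0 q x y, Nat.zero_mul, pow_zero, one_smul]; exact cast_heq _ _

theorem zero_mul (p q : ℕ) (y : B.A q) : B.mul p q 0 y = 0 := by
  simpa using B.smul_mul p q 0 0 y

theorem mul_zero (p q : ℕ) (x : B.A p) : B.mul p q x 0 = 0 := by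
  simpa using B.mul_smul p q 0 x 0

theorem d_one : B.d 0 B.one = 0 := by
  have h := B.leibniz 0 0 B.one B.one
  rw [B.mul_one, B.mul_one, B.one_mul, pow_zero, one_smul] at h
  exact left_eq_add.mp h

def smul0 (c : B.A 0) {p : ℕ} (x : B.A p) : B.A p :=
  cast (congrArg B.A (Nat.zero_add p)) (B.mul 0 p c x)

theorem smul0_heq (c : B.A 0) {p : ℕ} (x : B.A p) : B.smul0 c x ≍ B.mul 0 p c x :=
  cast_heq _ _

theorem etaMul_heq (η : B.A 1) (p : ℕ) (x : B.A p) : B.etaMul η p x ≍ B.mul 1 p η x :=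
  cast_heq _ _

theorem smul0_add (c : B.A 0) {p : ℕ} (x y : B.A p) :
    B.smul0 c (x + y) = B.smul0 c x + B.smul0 c y := by
  rw [smul0, B.mul_add, B.cast_add (Nat.zero_add p)]; rfl

theorem add_smul0 (c c' : B.A 0) {p : ℕ} (x : B.A p) :
    B.smul0 (c + c') x = B.smul0 c x + B.smul0 c' x := by
  rw [smul0, B.add_mul, B.cast_add (Nat.zero_add p)]; rfl

theorem smul0_zero (c : B.A 0) {p : ℕ} : B.smul0 c (0 : B.A p) = 0 := by
  simpa using B.smul0_add c (0 : B.A p) 0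

theorem zero_smul0 {p : ℕ} (x : B.A p) : B.smul0 0 x = 0 := by
  simpa using B.add_smul0 0 0 x

theorem smul0_sum {ι : Type} (c : B.A 0) {p : ℕ} (s : Finset ι) (g : ι → B.A p) :
    B.smul0 c (∑ i ∈ s, g i) = ∑ i ∈ s, B.smul0 c (g i) :=
  map_sum (AddMonoidHom.mk' (B.smul0 c) (B.smul0_add c)) g s

theorem sum_smul0 {ι : Type} {p : ℕ} (s : Finset ι) (g : ι → B.A 0) (x : B.A p) :
    B.smul0 (∑ i ∈ s, g i) x = ∑ i ∈ s, B.smul0 (g i) x :=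
  map_sum (AddMonoidHom.mk' (B.smul0 · x) (B.add_smul0 · · x)) g s

theorem one_smul0 {p : ℕ} (x : B.A p) : B.smul0 B.one x = x := by
  rw [smul0, B.one_mul, cast_cast, cast_eq]

theorem smul0_smul0 (c c' : B.A 0) {p : ℕ} (x : B.A p) :
    B.smul0 c (B.smul0 c' x) = B.smul0 (B.mul 0 0 c c') x := by
  refine eq_of_heq ((B.smul0_heq _ _).trans ?_)
  refine (B.mul_hcongr rfl (Nat.zero_add p).symm .rfl (B.smul0_heq _ _)).trans ?_
  exact (B.mul_assoc_heq 0 0 p c c' x).symm.trans (B.smul0_heq _ _).symm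

theorem etaMul_add (η : B.A 1) (p : ℕ) (x y : B.A p) :
    B.etaMul η p (x + y) = B.etaMul η p x + B.etaMul η p y := by
  rw [etaMul, B.mul_add, B.cast_add (Nat.add_comm 1 p)]; rfl

theorem add_etaMul (η η' : B.A 1) (p : ℕ) (x : B.A p) :
    B.etaMul (η + η') p x = B.etaMul η p x + B.etaMul η' p x := by
  rw [etaMul, B.add_mul, B.cast_add (Nat.add_comm 1 p)]; rfl

theorem zero_etaMul (p : ℕ) (x : B.A p) : B.etaMul 0 p x = 0 := by
  simpa using B.add_etaMul 0 0 p x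

theorem etaMul_sum {ι : Type} (η : B.A 1) (p : ℕ) (s : Finset ι) (g : ι → B.A p) :
    B.etaMul η p (∑ i ∈ s, g i) = ∑ i ∈ s, B.etaMul η p (g i) :=
  map_sum (AddMonoidHom.mk' (B.etaMul η p) (B.etaMul_add η p)) g s

theorem etaMul_smul0 (η : B.A 1) (c : B.A 0) (p : ℕ) (x : B.A p) :
    B.etaMul η p (B.smul0 c x) = B.smul0 c (B.etaMul η p x) := by
  refine eq_of_heq ((B.etaMul_heq _ _ _).trans ?_)
  refine (B.mul_hcongr rfl (Nat.zero_add p).symm .rfl (B.smul0_heq _ _)).trans ?_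
  refine (B.mul_assoc_heq 1 0 p η c x).symm.trans ?_
  refine (B.mul_hcongr rfl rfl (B.mul_comm_heq_of_zero 1 c η).symm .rfl).trans ?_
  refine (B.mul_assoc_heq 0 1 p c η x).trans (HEq.symm ?_)
  exact (B.smul0_heq _ _).trans (B.mul_hcongr rfl (by omega) .rfl (B.etaMul_heq _ _ _))

theorem mul_etaMul (c : B.A 0) (η : B.A 1) (p : ℕ) (x : B.A p) :
    B.etaMul (B.mul 0 1 c η) p x = B.smul0 c (B.etaMul η p x) := by
  refine eq_of_heq ((B.etaMul_heq _ _ _).trans ((B.mul_assoc_heq 0 1 p c η x).trans ?_))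
  exact (B.mul_hcongr rfl (by omega) .rfl (B.etaMul_heq η p x).symm).trans (B.smul0_heq _ _).symm

theorem d_sum {ι : Type} (p : ℕ) (s : Finset ι) (g : ι → B.A p) :
    B.d p (∑ i ∈ s, g i) = ∑ i ∈ s, B.d p (g i) :=
  map_sum (AddMonoidHom.mk' (B.d p) (B.d_add p)) g s

theorem d_smul0 (c : B.A 0) {p : ℕ} (x : B.A p) :
    B.d p (B.smul0 c x) = B.etaMul (B.d 0 c) p x + B.smul0 c (B.d p x) := by
  rw [smul0, B.d_cast (Nat.zero_add p), B.leibniz, B.cast_add (by omega), pow_zero, one_smul]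
  refine congrArg₂ (· + ·) ?_ ?_
  · exact eq_of_heq ((cast_heq _ _).trans ((cast_heq _ _).trans (B.etaMul_heq _ _ _).symm))
  · exact eq_of_heq ((cast_heq _ _).trans ((cast_heq _ _).trans (B.smul0_heq _ _).symm))

theorem pow0_add (a : B.A 0) (i j : ℕ) :
    B.mul 0 0 (B.pow0 a i) (B.pow0 a j) = B.pow0 a (i + j) := by
  induction i with
  | zero => rw [Nat.zero_add j]; exact B.one_mul 0 _
  | succ i ih =>
    rw [show i + 1 + j = i + j + 1 by omega]
    change B.mul 0 0 (B.mul 0 0 a (B.pow0 a i)) (B.pow0 a j) = B.mul 0 0 a (B.pow0 a (i + j))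
    rw [← ih]
    exact eq_of_heq (B.mul_assoc_heq 0 0 0 a (B.pow0 a i) (B.pow0 a j))

theorem pow0_smul (t : k) (a : B.A 0) (n : ℕ) : B.pow0 (t • a) n = t ^ n • B.pow0 a n := by
  induction n with
  | zero => rw [pow_zero, one_smul]; rfl
  | succ n ih =>
    change B.mul 0 0 (t • a) (B.pow0 (t • a) n) = t ^ (n + 1) • B.mul 0 0 a (B.pow0 a n)
    rw [ih, B.smul_mul, B.mul_smul, smul_smul, pow_succ']

theorem d_pow0_succ (a : B.A 0) (n : ℕ) :
    B.d 0 (B.pow0 a (n + 1)) = ((n : k) + 1) • B.mul 0 1 (B.pow0 a n) (B.d 0 a) := by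
  induction n with
  | zero =>
    change B.d 0 (B.mul 0 0 a B.one) = ((0 : ℕ) + 1 : k) • B.mul 0 1 B.one (B.d 0 a)
    rw [B.mul_one, B.one_mul, show ((0 : ℕ) : k) + 1 = 1 by simp, one_smul]; rfl
  | succ n ih =>
    change B.d (0 + 0) (B.mul 0 0 a (B.pow0 a (n + 1))) = _
    rw [B.leibniz, pow_zero, one_smul, ih, B.mul_smul]
    have hda : B.mul 1 0 (B.d 0 a) (B.pow0 a (n + 1)) = B.mul 0 1 (B.pow0 a (n + 1)) (B.d 0 a) :=
      eq_of_heq (B.mul_comm_heq_of_zero 1 _ _).symm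
    have hassoc : B.mul 0 1 a (B.mul 0 1 (B.pow0 a n) (B.d 0 a))
        = B.mul 0 1 (B.pow0 a (n + 1)) (B.d 0 a) :=
      eq_of_heq (B.mul_assoc_heq 0 0 1 a (B.pow0 a n) (B.d 0 a)).symm
    change B.mul 1 0 _ _ + ((n : k) + 1) • B.mul 0 1 _ _ = _
    rw [hda, hassoc, Nat.cast_succ]
    module

theorem expCoef_zero_right (a : B.A 0) : B.expCoef a 0 = B.one := by
  rw [expCoef, Nat.factorial_zero, Nat.cast_one, inv_one, one_smul]; rfl

theorem expCoef_zero_succ (n : ℕ) : B.expCoef 0 (n + 1) = 0 := by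
  rw [expCoef, pow0, B.zero_mul, smul_zero]

theorem d_expCoef_succ [CharZero k] (a : B.A 0) (n : ℕ) :
    B.d 0 (B.expCoef a (n + 1)) = B.mul 0 1 (B.expCoef a n) (B.d 0 a) := by
  rw [expCoef, expCoef, B.d_smul, B.d_pow0_succ, B.smul_mul, smul_smul, Nat.factorial_succ]
  congr 1
  push_cast
  field_simp [Nat.factorial_ne_zero]

theorem sum_antidiagonal_expCoef_smul [CharZero k] (s t : k) (a : B.A 0) (n : ℕ) :
    ∑ x ∈ antidiagonal n, B.mul 0 0 (B.expCoef (s • a) x.1) (B.expCoef (t • a) x.2)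
      = B.expCoef ((s + t) • a) n := by
  have hterm : ∀ x ∈ antidiagonal n, B.mul 0 0 (B.expCoef (s • a) x.1) (B.expCoef (t • a) x.2)
      = (s ^ x.1 / x.1.factorial * (t ^ x.2 / x.2.factorial)) • B.pow0 a n := by
    intro x hx
    rw [expCoef, expCoef, B.pow0_smul, B.pow0_smul, B.smul_mul, B.smul_mul, B.mul_smul,
      B.mul_smul, B.pow0_add, HasAntidiagonal.mem_antidiagonal.mp hx, smul_smul, smul_smul,
      smul_smul]
    congr 1
    ring
  rw [sum_congr rfl hterm, ← sum_smul, sum_antidiagonal_pow_div_factorial, expCoef,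
    B.pow0_smul, smul_smul, div_eq_inv_mul]

section Series

variable {p : ℕ}

/-- Coefficientwise action of the power series `Σ fᵢ sⁱ ∈ A⁰[[s]]` on `Σ cⱼ sʲ ∈ Aᵖ[[s]]`. -/
def seriesMul (f : ℕ → B.A 0) (c : ℕ → B.A p) : ℕ → B.A p := fun j =>
  ∑ x ∈ antidiagonal j, B.smul0 (f x.1) (c x.2)

/-- The differential `d_η` of the thickening, on untruncated coefficient sequences. -/
def thickDiff (η : B.A 1) (c : ℕ → B.A p) : ℕ → B.A (p + 1) :=
  (fun j => B.d p (c j)) + shiftSeq fun j => B.etaMul η p (c j)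

theorem seriesMul_add (f : ℕ → B.A 0) (c c' : ℕ → B.A p) :
    B.seriesMul f (c + c') = B.seriesMul f c + B.seriesMul f c' := by
  funext j
  simp only [seriesMul, Pi.add_apply, smul0_add, sum_add_distrib]

theorem seriesMul_seriesMul (f g : ℕ → B.A 0) (c : ℕ → B.A p) :
    B.seriesMul f (B.seriesMul g c)
      = B.seriesMul (fun n => ∑ x ∈ antidiagonal n, B.mul 0 0 (f x.1) (g x.2)) c := by
  funext j
  simp only [seriesMul, smul0_sum, sum_smul0, smul0_smul0]
  exact sum_antidiagonal_antidiagonal (fun i l r => B.smul0 (B.mul 0 0 (f i) (g l)) (c r)) j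

theorem seriesMul_expCoef_zero (c : ℕ → B.A p) : B.seriesMul (B.expCoef 0) c = c := by
  funext j
  rw [seriesMul,
    Finset.Nat.sum_antidiagonal_eq_sum_range_succ (fun i l => B.smul0 (B.expCoef 0 i) (c l)),
    sum_range_succ']
  simp only [expCoef_zero_succ, zero_smul0, sum_const_zero, expCoef_zero_right, one_smul0,
    Nat.sub_zero, zero_add]

theorem seriesMul_shiftSeq (f : ℕ → B.A 0) (c : ℕ → B.A p) :
    B.seriesMul f (shiftSeq c) = shiftSeq (B.seriesMul f c) := by
  funext j
  cases j with
  | zero => simp [seriesMul, shiftSeq, smul0_zero]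
  | succ j => simp [seriesMul, shiftSeq, Finset.Nat.sum_antidiagonal_succ', smul0_zero]

theorem etaMul_seriesMul (η : B.A 1) (f : ℕ → B.A 0) (c : ℕ → B.A p) (j : ℕ) :
    B.etaMul η p (B.seriesMul f c j) = B.seriesMul f (fun l => B.etaMul η p (c l)) j := by
  simp only [seriesMul, etaMul_sum, etaMul_smul0]

theorem d_seriesMul (f : ℕ → B.A 0) (c : ℕ → B.A p) (j : ℕ) :
    B.d p (B.seriesMul f c j)
      = ∑ x ∈ antidiagonal j, B.etaMul (B.d 0 (f x.1)) p (c x.2)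
        + B.seriesMul f (fun l => B.d p (c l)) j := by
  simp only [seriesMul, d_sum, d_smul0, sum_add_distrib]

-- `d(aⁿ⁺¹/(n+1)!) = (aⁿ/n!) da`: differentiating `exp(a ⊗ s)` multiplies it by `da ⊗ s`.
theorem sum_etaMul_d_expCoef [CharZero k] (a : B.A 0) (c : ℕ → B.A p) (j : ℕ) :
    ∑ x ∈ antidiagonal j, B.etaMul (B.d 0 (B.expCoef a x.1)) p (c x.2)
      = shiftSeq (B.seriesMul (B.expCoef a) fun l => B.etaMul (B.d 0 a) p (c l)) j := by
  cases j with
  | zero => simp [shiftSeq, expCoef_zero_right, d_one, zero_etaMul]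
  | succ j =>
    simp [shiftSeq, seriesMul, Finset.Nat.sum_antidiagonal_succ, expCoef_zero_right, d_one,
      zero_etaMul, d_expCoef_succ, mul_etaMul]

theorem thickDiff_seriesMul_expCoef [CharZero k] {η₁ η₂ : B.A 1} {a : B.A 0}
    (ha : B.d 0 a = η₁ - η₂) (c : ℕ → B.A p) :
    B.thickDiff η₂ (B.seriesMul (B.expCoef a) c)
      = B.seriesMul (B.expCoef a) (B.thickDiff η₁ c) := by
  have hη : (fun l => B.etaMul η₁ p (c l))
      = (fun l => B.etaMul (B.d 0 a) p (c l)) + fun l => B.etaMul η₂ p (c l) := by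
    funext l
    rw [Pi.add_apply, ← B.add_etaMul, ha, sub_add_cancel]
  have hη₂ : (fun l => B.etaMul η₂ p (B.seriesMul (B.expCoef a) c l))
      = B.seriesMul (B.expCoef a) fun l => B.etaMul η₂ p (c l) :=
    funext (B.etaMul_seriesMul η₂ _ c)
  rw [thickDiff, thickDiff, seriesMul_add, seriesMul_shiftSeq, hη, seriesMul_add, shiftSeq_add,
    hη₂]
  funext j
  simp only [Pi.add_apply]
  rw [d_seriesMul, sum_etaMul_d_expCoef]
  abel

end Series

section Thickening

variable {m p : ℕ}

theorem expWedge_apply (a : B.A 0) {ω : Fin m → B.A p} (c : ℕ → B.A p)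
    (hc : ∀ l (h : l < m), c l = ω ⟨l, h⟩) (j : Fin m) :
    B.expWedge a m p ω j = B.seriesMul (B.expCoef a) c j := by
  rw [expWedge, seriesMul,
    Finset.Nat.sum_antidiagonal_eq_sum_range_succ (fun i l => B.smul0 (B.expCoef a i) (c l))]
  refine sum_congr rfl fun i _ => ?_
  rw [hc]
  rfl

theorem thickD_apply (η : B.A 1) {ω : Fin m → B.A p} (c : ℕ → B.A p)
    (hc : ∀ l (h : l < m), c l = ω ⟨l, h⟩) (j : Fin m) :
    B.thickD η m p ω j = B.thickDiff η c j := by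
  obtain ⟨_ | j, hj⟩ := j
  · simp [thickD, thickDiff, shiftSeq, hc 0 hj]
  · simp [thickD, thickDiff, shiftSeq, hc (j + 1) hj, hc j (by omega)]

theorem thickD_expWedge [CharZero k] {η₁ η₂ : B.A 1} {a : B.A 0} (ha : B.d 0 a = η₁ - η₂)
    (ω : Fin m → B.A p) :
    B.thickD η₂ m p (B.expWedge a m p ω) = B.expWedge a m (p + 1) (B.thickD η₁ m p ω) := by
  have hc (l : ℕ) (h : l < m) : Function.extend Fin.val ω 0 l = ω ⟨l, h⟩ :=
    Fin.val_injective.extend_apply ω 0 ⟨l, h⟩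
  funext j
  rw [B.thickD_apply η₂ _ fun l h => (B.expWedge_apply a _ hc ⟨l, h⟩).symm,
    B.thickDiff_seriesMul_expCoef ha,
    B.expWedge_apply a _ fun l h => (B.thickD_apply η₁ _ hc ⟨l, h⟩).symm]

theorem expWedge_smul_expWedge_smul [CharZero k] {s t : k} (hst : s + t = 0) (a : B.A 0)
    (ω : Fin m → B.A p) : B.expWedge (s • a) m p (B.expWedge (t • a) m p ω) = ω := by
  have hc (l : ℕ) (h : l < m) : Function.extend Fin.val ω 0 l = ω ⟨l, h⟩ :=
    Fin.val_injective.extend_apply ω 0 ⟨l, h⟩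
  funext j
  rw [B.expWedge_apply (s • a) _ fun l h => (B.expWedge_apply (t • a) _ hc ⟨l, h⟩).symm,
    seriesMul_seriesMul]
  simp only [sum_antidiagonal_expCoef_smul, hst, zero_smul, seriesMul_expCoef_zero]
  exact hc j j.isLt

end Thickening

end GCDA

theorem stmt_5_general {k : Type} [Field k] [CharZero k] (B : GCDA k)
    (η₁ η₂ : B.A 1)
    (a : B.A 0) (ha : B.d 0 a = η₁ - η₂) (m : ℕ) :
    (∀ (p : ℕ) (ω : Fin m → B.A p),
      B.thickD η₂ m p (B.expWedge a m p ω) = B.expWedge a m (p + 1) (B.thickD η₁ m p ω)) ∧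
    (∀ p : ℕ,
      Function.LeftInverse (B.expWedge (-a) m p) (B.expWedge a m p) ∧
      Function.RightInverse (B.expWedge (-a) m p) (B.expWedge a m p)) := by
  have hinv (s t : k) (hst : s + t = 0) (p : ℕ) (ω : Fin m → B.A p) :=
    B.expWedge_smul_expWedge_smul hst a ω
  refine ⟨fun p ω => B.thickD_expWedge ha ω, fun p => ⟨fun ω => ?_, fun ω => ?_⟩⟩
  · simpa only [neg_one_smul, one_smul] using hinv (-1) 1 (neg_add_cancel 1) p ω
  · simpa only [neg_one_smul, one_smul] using hinv 1 (-1) (add_neg_cancel 1) p ω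

/-- If `η₁, η₂ ∈ A¹ ∩ ker d` are cohomologous, say `η₁ − η₂ = da` with
`a ∈ A⁰`, then wedge multiplication by `exp(a ⊗ s)` is a morphism of cochain complexes
`A(η₁, m) → A(η₂, m)` and is an isomorphism, with inverse wedge multiplication by
`exp(−a ⊗ s)`. -/
theorem stmt_5 {k : Type} [Field k] [CharZero k] (B : GCDA k)
    (η₁ η₂ : B.A 1) (h₁ : B.d 1 η₁ = 0) (h₂ : B.d 1 η₂ = 0)
    (a : B.A 0) (ha : B.d 0 a = η₁ - η₂) (m : ℕ) (hm : 1 ≤ m) :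
    (∀ (p : ℕ) (ω : Fin m → B.A p),
      B.thickD η₂ m p (B.expWedge a m p ω) = B.expWedge a m (p + 1) (B.thickD η₁ m p ω)) ∧
    (∀ p : ℕ,
      Function.LeftInverse (B.expWedge (-a) m p) (B.expWedge a m p) ∧
      Function.RightInverse (B.expWedge (-a) m p) (B.expWedge a m p)) :=
  stmt_5_general B η₁ η₂ a ha m
end

section
/- Let R_∞ = k[[s]] and let C• be a cochain complex of torsion-free R_∞-modules. Suppose m ≥ 1 is such that s^m annihilates the R_∞-torsion of every cohomology module H*(C•). For i ≥ 1, j ≥ 0 let ψᵢⱼ: C• ⊗_{R_∞} R_i → C• ⊗_{R_∞} R_{i+j} be induced by the injection R_i → R_{i+j} sending 1 to s^j, where R_n = k[[s]]/(s^n). Then for all i, j ≥ m, the natural map C• → C• ⊗ R_i induces an isomorphism Tors_{R_∞} H*(C•) ≅ ker( ψᵢⱼ*: H*(C• ⊗ R_i) → H*(C• ⊗ R_{i+j}) ). -/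
/-!
Write `s` for the uniformizer and identify `C ⊗ R_i` with `C / sⁱC`; the class of `x` dies
under `ψᵢⱼ*` exactly when `sʲx` is a coboundary modulo `s^{i+j}`. Since the `Cⁿ` are
torsion-free, `s` can be cancelled after applying `d`. A torsion cocycle `z` has `sᵐz` a
coboundary, hence so is `sʲz` for `j ≥ m`. Conversely, if `sʲx = dw + s^{i+j}u`, then
`z = x - sⁱu` satisfies `sʲz = dw`, so it is a torsion cocycle lifting `x`. Injectivity: if a
torsion cocycle is `z = dw + sⁱu`, then `u` is again a torsion cocycle, so `sⁱu` is a
coboundary once `i ≥ m`.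
-/

namespace CochainComplexTorsion

section CommRing

variable {R : Type*} [CommRing R] {C : ℤ → Type*} [∀ n, AddCommGroup (C n)]
  [∀ n, Module R (C n)] (d : ∀ n : ℤ, C n →ₗ[R] C (n + 1))

def IsTorsionClass (n : ℤ) (z : C (n + 1)) : Prop :=
  ∃ r : R, r ≠ 0 ∧ ∃ w : C n, r • z = d n w

def IsCoboundaryMod (r : R) (n : ℤ) (x : C (n + 1)) : Prop :=
  ∃ w : C n, ∃ u : C (n + 1), x = d n w + r • u

theorem exists_pow_smul_eq_d_of_le {s : R} {m j : ℕ} {n : ℤ} (hmj : m ≤ j) {z : C (n + 1)}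
    (hz : ∃ w : C n, s ^ m • z = d n w) : ∃ w : C n, s ^ j • z = d n w := by
  obtain ⟨w, hw⟩ := hz
  obtain ⟨c, rfl⟩ := Nat.exists_eq_add_of_le hmj
  exact ⟨s ^ c • w, by rw [pow_add, mul_comm, mul_smul, hw, map_smul]⟩

end CommRing

section Domain

variable {R : Type*} [CommRing R] [IsDomain R] {C : ℤ → Type*} [∀ n, AddCommGroup (C n)]
  [∀ n, Module R (C n)] [∀ n, NoZeroSMulDivisors R (C n)]
  (d : ∀ n : ℤ, C n →ₗ[R] C (n + 1))

theorem d_eq_zero_of_d_pow_smul_eq_zero {s : R} (hs : s ≠ 0) {a : ℕ} {n : ℤ} {y : C n}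
    (hy : d n (s ^ a • y) = 0) : d n y = 0 := by
  rw [map_smul] at hy
  exact (smul_eq_zero.mp hy).resolve_left (pow_ne_zero a hs)

theorem exists_eq_d_of_isCoboundaryMod {s : R} (hs : s ≠ 0) {m i : ℕ} (hmi : m ≤ i) {n : ℤ}
    (hdd : ∀ x : C n, d (n + 1) (d n x) = 0)
    (hann : ∀ z : C (n + 1), d (n + 1) z = 0 → IsTorsionClass d n z →
      ∃ w : C n, s ^ m • z = d n w)
    {z : C (n + 1)} (hz : d (n + 1) z = 0) (htor : IsTorsionClass d n z)
    (hcob : IsCoboundaryMod d (s ^ i) n z) : ∃ w : C n, z = d n w := by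
  obtain ⟨w, u, rfl⟩ := hcob
  obtain ⟨w₀, hw₀⟩ := hann _ hz htor
  have hu : d (n + 1) u = 0 := by
    refine d_eq_zero_of_d_pow_smul_eq_zero d hs (a := i) ?_
    rwa [map_add, hdd, zero_add] at hz
  have hutor : IsTorsionClass d n u := by
    refine ⟨s ^ (m + i), pow_ne_zero _ hs, w₀ - s ^ m • w, ?_⟩
    rw [map_sub, map_smul, ← hw₀, smul_add, smul_smul, ← pow_add, add_sub_cancel_left]
  obtain ⟨w₁, hw₁⟩ := exists_pow_smul_eq_d_of_le d hmi (hann u hu hutor)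
  exact ⟨w + w₁, by rw [map_add, hw₁]⟩

theorem exists_isTorsionClass_of_isCoboundaryMod {s : R} (hs : s ≠ 0) {i j : ℕ} {n : ℤ}
    (hdd : ∀ x : C n, d (n + 1) (d n x) = 0) {x : C (n + 1)}
    (hx : IsCoboundaryMod d (s ^ (i + j)) n (s ^ j • x)) :
    ∃ z : C (n + 1), d (n + 1) z = 0 ∧ IsTorsionClass d n z ∧
      ∃ w : C n, ∃ u : C (n + 1), x = z + d n w + s ^ i • u := by
  obtain ⟨w, u, hwu⟩ := hx
  have hz : s ^ j • (x - s ^ i • u) = d n w := by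
    rw [smul_sub, smul_smul, ← pow_add, add_comm j i, hwu, add_sub_cancel_right]
  refine ⟨x - s ^ i • u, ?_, ⟨s ^ j, pow_ne_zero j hs, w, hz⟩, 0, u, ?_⟩
  · exact d_eq_zero_of_d_pow_smul_eq_zero d hs (a := j) (by rw [hz, hdd])
  · rw [map_zero, add_zero, sub_add_cancel]

end Domain

end CochainComplexTorsion

open CochainComplexTorsion

theorem stmt_7_general (k : Type) [Field k]
    (C : ℤ → Type) [∀ n, AddCommGroup (C n)] [∀ n, Module (PowerSeries k) (C n)]
    [∀ n, NoZeroSMulDivisors (PowerSeries k) (C n)]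
    (d : ∀ n : ℤ, C n →ₗ[PowerSeries k] C (n + 1))
    (hdd : ∀ (n : ℤ) (x : C n), d (n + 1) (d n x) = 0)
    (m : ℕ)
    (hann : ∀ (n : ℤ) (z : C (n + 1)), d (n + 1) z = 0 →
      (∃ r : PowerSeries k, r ≠ 0 ∧ ∃ w : C n, r • z = d n w) →
      ∃ w : C n, (PowerSeries.X : PowerSeries k) ^ m • z = d n w)
    (i j : ℕ) (hi : m ≤ i) (hj : m ≤ j) (n : ℤ) :
    -- (a) a torsion cohomology class of `C` maps to the kernel of `ψᵢⱼ*`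
    (∀ z : C (n + 1), d (n + 1) z = 0 →
      (∃ r : PowerSeries k, r ≠ 0 ∧ ∃ w : C n, r • z = d n w) →
      ∃ w : C n, ∃ u : C (n + 1),
        (PowerSeries.X : PowerSeries k) ^ j • z
          = d n w + (PowerSeries.X : PowerSeries k) ^ (i + j) • u) ∧
    -- (b) injectivity: a torsion cocycle which is a coboundary mod `sⁱ` is a coboundary
    (∀ z : C (n + 1), d (n + 1) z = 0 →
      (∃ r : PowerSeries k, r ≠ 0 ∧ ∃ w : C n, r • z = d n w) →
      (∃ w : C n, ∃ u : C (n + 1),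
        z = d n w + (PowerSeries.X : PowerSeries k) ^ i • u) →
      ∃ w : C n, z = d n w) ∧
    -- (c) surjectivity: a class of `H*(C/sⁱ)` killed by `ψᵢⱼ*` comes from a torsion class
    (∀ x : C (n + 1),
      (∃ v : C (n + 1 + 1), d (n + 1) x = (PowerSeries.X : PowerSeries k) ^ i • v) →
      (∃ w : C n, ∃ u : C (n + 1),
        (PowerSeries.X : PowerSeries k) ^ j • x
          = d n w + (PowerSeries.X : PowerSeries k) ^ (i + j) • u) →
      ∃ z : C (n + 1), d (n + 1) z = 0 ∧
        (∃ r : PowerSeries k, r ≠ 0 ∧ ∃ w : C n, r • z = d n w) ∧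
        ∃ w : C n, ∃ u : C (n + 1),
          x = z + d n w + (PowerSeries.X : PowerSeries k) ^ i • u) := by
  refine ⟨fun z hz htor => ?_, fun z hz htor hcob => ?_, fun x _ hx => ?_⟩
  · obtain ⟨w, hw⟩ := exists_pow_smul_eq_d_of_le d hj (hann n z hz htor)
    exact ⟨w, 0, by rw [hw, smul_zero, add_zero]⟩
  · exact exists_eq_d_of_isCoboundaryMod d PowerSeries.X_ne_zero hi (hdd n) (hann n) hz htor hcob
  · exact exists_isTorsionClass_of_isCoboundaryMod d PowerSeries.X_ne_zero (hdd n) hx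

/-- Let `R_∞ = k[[s]]` and `C•` a cochain complex of torsion-free
`R_∞`-modules such that `sᵐ` annihilates the torsion of every cohomology module.  Identifying
`C• ⊗ R_i` with `C•/sⁱC•`, and letting `ψᵢⱼ : C•/sⁱ → C•/s^{i+j}` be induced by
multiplication by `sʲ`, for all `i, j ≥ m` the natural map `C• → C•/sⁱ` induces an
isomorphism `Tors H*(C•) ≅ ker ψᵢⱼ*`.  This is expressed elementwise: (a) torsion
cohomology classes land in `ker ψᵢⱼ*`, (b) the induced map is injective, and (c) every class
of `ker ψᵢⱼ*` comes from a torsion class of `H*(C•)`. -/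
theorem stmt_7 (k : Type) [Field k]
    (C : ℤ → Type) [∀ n, AddCommGroup (C n)] [∀ n, Module (PowerSeries k) (C n)]
    [∀ n, NoZeroSMulDivisors (PowerSeries k) (C n)]
    (d : ∀ n : ℤ, C n →ₗ[PowerSeries k] C (n + 1))
    (hdd : ∀ (n : ℤ) (x : C n), d (n + 1) (d n x) = 0)
    (m : ℕ) (hm : 1 ≤ m)
    (hann : ∀ (n : ℤ) (z : C (n + 1)), d (n + 1) z = 0 →
      (∃ r : PowerSeries k, r ≠ 0 ∧ ∃ w : C n, r • z = d n w) →
      ∃ w : C n, (PowerSeries.X : PowerSeries k) ^ m • z = d n w)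
    (i j : ℕ) (hi : m ≤ i) (hj : m ≤ j) (n : ℤ) :
    -- (a) a torsion cohomology class of `C` maps to the kernel of `ψᵢⱼ*`
    (∀ z : C (n + 1), d (n + 1) z = 0 →
      (∃ r : PowerSeries k, r ≠ 0 ∧ ∃ w : C n, r • z = d n w) →
      ∃ w : C n, ∃ u : C (n + 1),
        (PowerSeries.X : PowerSeries k) ^ j • z
          = d n w + (PowerSeries.X : PowerSeries k) ^ (i + j) • u) ∧
    -- (b) injectivity: a torsion cocycle which is a coboundary mod `sⁱ` is a coboundary
    (∀ z : C (n + 1), d (n + 1) z = 0 →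
      (∃ r : PowerSeries k, r ≠ 0 ∧ ∃ w : C n, r • z = d n w) →
      (∃ w : C n, ∃ u : C (n + 1),
        z = d n w + (PowerSeries.X : PowerSeries k) ^ i • u) →
      ∃ w : C n, z = d n w) ∧
    -- (c) surjectivity: a class of `H*(C/sⁱ)` killed by `ψᵢⱼ*` comes from a torsion class
    (∀ x : C (n + 1),
      (∃ v : C (n + 1 + 1), d (n + 1) x = (PowerSeries.X : PowerSeries k) ^ i • v) →
      (∃ w : C n, ∃ u : C (n + 1),
        (PowerSeries.X : PowerSeries k) ^ j • x
          = d n w + (PowerSeries.X : PowerSeries k) ^ (i + j) • u) →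
      ∃ z : C (n + 1), d (n + 1) z = 0 ∧
        (∃ r : PowerSeries k, r ≠ 0 ∧ ∃ w : C n, r • z = d n w) ∧
        ∃ w : C n, ∃ u : C (n + 1),
          x = z + d n w + (PowerSeries.X : PowerSeries k) ^ i • u) :=
  stmt_7_general k C d hdd m hann i j hi hj n
end

section
/- Let R_∞ = k[[s]] and let C• be a cochain complex of torsion-free R_∞-modules such that s^m annihilates Tors_{R_∞} H*(C•). For j ≥ 0, i ≥ 1 let φⱼᵢ: C• ⊗_{R_∞} R_{i+j} → C• ⊗_{R_∞} R_i be induced by the projection R_{i+j} → R_i. Then for all j ≥ m and all i ≥ 1, the natural map C• → C• ⊗ R_i induces an isomorphism H*(C•) ⊗_{R_∞} R_i ≅ image( φⱼᵢ*: H*(C• ⊗ R_{i+j}) → H*(C• ⊗ R_i) ). -/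
/-!
A class in the image of `H*(C/s^{i+j}) → H*(C/sⁱ)` is represented by `x` with
`dx = s^{i+j} v`. Torsion-freeness makes `v` a cocycle whose class is killed by `s^{i+j}`,
hence by `sᵐ`: `sᵐ v = dw`. Then `x - s^{i+j-m} w` is a cocycle of `C` congruent to `x`
modulo `sⁱ` because `j ≥ m`. Injectivity of `H*(C)/sⁱ → H*(C/sⁱ)` is torsion-freeness alone:
if `z = dw + sⁱu` is a cocycle then so is `u`.
-/

section

variable {R : Type*} [Ring R] {C : ℤ → Type*} [∀ n, AddCommGroup (C n)]
  [∀ n, Module R (C n)] (d : ∀ n : ℤ, C n →ₗ[R] C (n + 1))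

theorem d_eq_zero_of_d_smul_eq_zero {n : ℤ} [NoZeroSMulDivisors R (C (n + 1))] {r : R}
    (hr : r ≠ 0) {u : C n} (h : d n (r • u) = 0) : d n u = 0 := by
  rw [map_smul] at h
  exact (eq_zero_or_eq_zero_of_smul_eq_zero h).resolve_left hr

theorem exists_cocycle_add_pow_smul {n : ℤ} {s : R} {i j m : ℕ} (hm : m ≤ j) {x : C n}
    {v : C (n + 1)} {w : C n} (hx : d n x = s ^ (i + j) • v) (hw : s ^ m • v = d n w) :
    ∃ z : C n, d n z = 0 ∧ ∃ u : C n, x = z + s ^ i • u := by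
  refine ⟨x - s ^ i • s ^ (j - m) • w, ?_, s ^ (j - m) • w, by abel⟩
  rw [map_sub, map_smul, map_smul, ← hw, hx, smul_smul, smul_smul, ← pow_add, ← pow_add,
    show i + (j - m) + m = i + j by omega, sub_self]

end

theorem stmt_8_general (k : Type) [Field k]
    (C : ℤ → Type) [∀ n, AddCommGroup (C n)] [∀ n, Module (PowerSeries k) (C n)]
    [∀ n, NoZeroSMulDivisors (PowerSeries k) (C n)]
    (d : ∀ n : ℤ, C n →ₗ[PowerSeries k] C (n + 1))
    (hdd : ∀ (n : ℤ) (x : C n), d (n + 1) (d n x) = 0)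
    (m : ℕ)
    (hann : ∀ (n : ℤ) (z : C (n + 1)), d (n + 1) z = 0 →
      (∃ r : PowerSeries k, r ≠ 0 ∧ ∃ w : C n, r • z = d n w) →
      ∃ w : C n, (PowerSeries.X : PowerSeries k) ^ m • z = d n w)
    (i j : ℕ) (hj : m ≤ j) (n : ℤ) :
    -- (a) every cohomology class of `C` lies in the image of `φⱼᵢ*`
    (∀ z : C (n + 1), d (n + 1) z = 0 →
      ∃ x : C (n + 1),
        (∃ v : C (n + 1 + 1), d (n + 1) x = (PowerSeries.X : PowerSeries k) ^ (i + j) • v) ∧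
        ∃ w : C n, ∃ u : C (n + 1),
          z = x + d n w + (PowerSeries.X : PowerSeries k) ^ i • u) ∧
    -- (b) injectivity of `H*(C) ⊗ R_i → H*(C/sⁱ)`
    (∀ z : C (n + 1), d (n + 1) z = 0 →
      (∃ w : C n, ∃ u : C (n + 1),
        z = d n w + (PowerSeries.X : PowerSeries k) ^ i • u) →
      ∃ z' : C (n + 1), d (n + 1) z' = 0 ∧
        ∃ w : C n, z = (PowerSeries.X : PowerSeries k) ^ i • z' + d n w) ∧
    -- (c) the image of `φⱼᵢ*` consists of classes coming from `H*(C)`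
    (∀ x : C (n + 1),
      (∃ v : C (n + 1 + 1), d (n + 1) x = (PowerSeries.X : PowerSeries k) ^ (i + j) • v) →
      ∃ z : C (n + 1), d (n + 1) z = 0 ∧
        ∃ w : C n, ∃ u : C (n + 1),
          x = z + d n w + (PowerSeries.X : PowerSeries k) ^ i • u) := by
  have hX (e : ℕ) : (PowerSeries.X : PowerSeries k) ^ e ≠ 0 :=
    pow_ne_zero _ PowerSeries.X_ne_zero
  refine ⟨fun z hz => ⟨z, ⟨0, by simp [hz]⟩, 0, 0, by simp⟩, ?_, ?_⟩
  · rintro z hz ⟨w, u, rfl⟩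
    have hu : d (n + 1) u = 0 :=
      d_eq_zero_of_d_smul_eq_zero d (hX i) (by simpa [hdd] using hz)
    exact ⟨u, hu, w, add_comm _ _⟩
  · rintro x ⟨v, hv⟩
    have hv_cocycle : d (n + 1 + 1) v = 0 :=
      d_eq_zero_of_d_smul_eq_zero d (hX (i + j)) (by rw [← hv, hdd])
    obtain ⟨w, hw⟩ := hann (n + 1) v hv_cocycle ⟨_, hX (i + j), x, hv.symm⟩
    obtain ⟨z, hz, u, rfl⟩ := exists_cocycle_add_pow_smul d hj hv hw
    exact ⟨z, hz, 0, u, by simp⟩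

/-- Let `R_∞ = k[[s]]` and `C•` a cochain complex of torsion-free
`R_∞`-modules such that `sᵐ` annihilates `Tors H*(C•)`.  Identifying `C• ⊗ R_n` with
`C•/sⁿC•`, and letting `φⱼᵢ : C•/s^{i+j} → C•/sⁱ` be the projection, for all `j ≥ m` and
`i ≥ 1` the natural map `C• → C•/sⁱ` induces an isomorphism
`H*(C•) ⊗ R_i ≅ image φⱼᵢ*`, expressed elementwise: (a) every cohomology class of `C` maps
into the image of `φⱼᵢ*`, (b) the induced map `H*(C)/sⁱH*(C) → H*(C/sⁱ)` is injective, and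
(c) the image of `φⱼᵢ*` consists of classes coming from `H*(C)`. -/
theorem stmt_8 (k : Type) [Field k]
    (C : ℤ → Type) [∀ n, AddCommGroup (C n)] [∀ n, Module (PowerSeries k) (C n)]
    [∀ n, NoZeroSMulDivisors (PowerSeries k) (C n)]
    (d : ∀ n : ℤ, C n →ₗ[PowerSeries k] C (n + 1))
    (hdd : ∀ (n : ℤ) (x : C n), d (n + 1) (d n x) = 0)
    (m : ℕ) (hm : 1 ≤ m)
    (hann : ∀ (n : ℤ) (z : C (n + 1)), d (n + 1) z = 0 →
      (∃ r : PowerSeries k, r ≠ 0 ∧ ∃ w : C n, r • z = d n w) →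
      ∃ w : C n, (PowerSeries.X : PowerSeries k) ^ m • z = d n w)
    (i j : ℕ) (hi : 1 ≤ i) (hj : m ≤ j) (n : ℤ) :
    -- (a) every cohomology class of `C` lies in the image of `φⱼᵢ*`
    (∀ z : C (n + 1), d (n + 1) z = 0 →
      ∃ x : C (n + 1),
        (∃ v : C (n + 1 + 1), d (n + 1) x = (PowerSeries.X : PowerSeries k) ^ (i + j) • v) ∧
        ∃ w : C n, ∃ u : C (n + 1),
          z = x + d n w + (PowerSeries.X : PowerSeries k) ^ i • u) ∧
    -- (b) injectivity of `H*(C) ⊗ R_i → H*(C/sⁱ)`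
    (∀ z : C (n + 1), d (n + 1) z = 0 →
      (∃ w : C n, ∃ u : C (n + 1),
        z = d n w + (PowerSeries.X : PowerSeries k) ^ i • u) →
      ∃ z' : C (n + 1), d (n + 1) z' = 0 ∧
        ∃ w : C n, z = (PowerSeries.X : PowerSeries k) ^ i • z' + d n w) ∧
    -- (c) the image of `φⱼᵢ*` consists of classes coming from `H*(C)`
    (∀ x : C (n + 1),
      (∃ v : C (n + 1 + 1), d (n + 1) x = (PowerSeries.X : PowerSeries k) ^ (i + j) • v) →
      ∃ z : C (n + 1), d (n + 1) z = 0 ∧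
        ∃ w : C n, ∃ u : C (n + 1),
          x = z + d n w + (PowerSeries.X : PowerSeries k) ^ i • u) :=
  stmt_8_general k C d hdd m hann i j hj n
end

section
/- Let V be a finite-dimensional vector space over a field, equipped with an increasing filtration W• that is finite and exhaustive (W_a = 0 for a ≪ 0 and W_b = V for b ≫ 0). Let θ: V → V be a linear map satisfying both strictness conditions: θ(W_k V) = W_k V ∩ θ(V) for all k, and θ(W_{k+2} V) = W_k V ∩ θ(V) for all k. Then θ = 0. -/
/-! The two strictness conditions give `W_{k+2} ∩ im θ = θ(W_{k+2}) = W_k ∩ im θ`, so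
`k ↦ W_k ∩ im θ` is monotone and 2-periodic, hence constant. It is `0` for `k ≪ 0` and `im θ`
for `k ≫ 0`, so `im θ = 0`. -/

theorem Monotone.eq_of_periodic {α β : Type*} [AddCommGroup α] [LinearOrder α]
    [IsOrderedAddMonoid α] [Archimedean α] [PartialOrder β] {f : α → β} {c : α}
    (hf : Monotone f) (hp : Function.Periodic f c) (hc : 0 < c) (x y : α) : f x = f y := by
  have le_of_periodic : ∀ u v, f v ≤ f u := fun u v => by
    obtain ⟨k, hk⟩ := Archimedean.arch (v - u) hc
    calc f v ≤ f (u + k • c) := hf (sub_le_iff_le_add'.mp hk)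
      _ = f u := hp.nsmul k u
  exact le_antisymm (le_of_periodic y x) (le_of_periodic x y)

theorem stmt_14_general (K V : Type) [Field K] [AddCommGroup V] [Module K V]
    (W : ℤ → Submodule K V) (hmono : Monotone W)
    (a b : ℤ) (ha : W a = ⊥) (hb : W b = ⊤)
    (θ : V →ₗ[K] V)
    (h1 : ∀ n : ℤ, Submodule.map θ (W n) = W n ⊓ LinearMap.range θ)
    (h2 : ∀ n : ℤ, Submodule.map θ (W (n + 2)) = W n ⊓ LinearMap.range θ) :
    θ = 0 := by
  have hmono_inf : Monotone fun n => W n ⊓ LinearMap.range θ :=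
    fun _ _ h => inf_le_inf_right _ (hmono h)
  have hperiodic : Function.Periodic (fun n => W n ⊓ LinearMap.range θ) 2 :=
    fun n => (h1 (n + 2)).symm.trans (h2 n)
  have hconst := hmono_inf.eq_of_periodic hperiodic two_pos b a
  simp only [ha, hb, top_inf_eq, bot_inf_eq] at hconst
  exact LinearMap.range_eq_bot.mp hconst

/-- Let `V` be a finite-dimensional vector space with a finite exhaustive
increasing filtration `W`, and let `θ : V → V` be a linear map satisfying both strictness
conditions `θ(W_k) = W_k ∩ im θ` and `θ(W_{k+2}) = W_k ∩ im θ` for all `k`. Then `θ = 0`. -/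
theorem stmt_14 (K V : Type) [Field K] [AddCommGroup V] [Module K V] [FiniteDimensional K V]
    (W : ℤ → Submodule K V) (hmono : Monotone W)
    (a b : ℤ) (ha : W a = ⊥) (hb : W b = ⊤)
    (θ : V →ₗ[K] V)
    (h1 : ∀ n : ℤ, Submodule.map θ (W n) = W n ⊓ LinearMap.range θ)
    (h2 : ∀ n : ℤ, Submodule.map θ (W (n + 2)) = W n ⊓ LinearMap.range θ) :
    θ = 0 :=
  stmt_14_general K V W hmono a b ha hb θ h1 h2
end
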